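/- Let n ≥ 3 be an integer, M a finite group of order 3·2^n, P a Sylow 2-subgroup of M, G = Park(M,P) Park's group and ι : M → G Park's embedding, and k an algebraically closed field of characteristic 2. Then the index |G : ι(M)| is a power of 2, and consequently the permutation kG-module k[G/ι(M)] is indecomposable (equivalently, Sc(G, ι(P)) = Ind_{ι(M)}^G(k)). -/

import Mathlib

/-- A module is indecomposable if it is nonzero and is not the direct sum of
two nonzero submodules. -/
def IsIndecomposableModule (R : Type*) (M : Type*) [Semiring R] [AddCommMonoid M]
    [Module R M] : Prop :=
  Nontrivial M ∧ ∀ U W : Submodule R M, IsCompl U W → U = ⊥ ∨ W = ⊥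

/-- The permutation `kG`-module `k[X]` on a `G`-set `X`, as a module over the
group algebra `MonoidAlgebra k G`. -/
abbrev PermutationModule (k G X : Type*) [CommSemiring k] [Monoid G] [MulAction G X] :=
  (Representation.ofMulAction k G X).asModule

/-- Park's group `Park(M, P)`: the group of bijections of `M` commuting with the
right multiplication action of `P`. -/
def parkGroup (M : Type*) [Group M] (P : Subgroup M) : Subgroup (Equiv.Perm M) where
  carrier := {f : Equiv.Perm M | ∀ (m u : M), u ∈ P → f (m * u) = f m * u}
  one_mem' := by intro m u _; rfl
  mul_mem' := by
    intro f g hf hg m u hu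
    simp only [Equiv.Perm.mul_apply]
    rw [hg m u hu, hf _ u hu]
  inv_mem' := by
    intro f hf m u hu
    apply f.injective
    rw [Equiv.Perm.coe_inv, Equiv.apply_symm_apply, hf _ u hu, Equiv.apply_symm_apply]

/-- Park's embedding of `M` into `Park(M, P)`, sending `m` to left translation by `m`. -/
def parkEmbed (M : Type*) [Group M] (P : Subgroup M) : M →* ↥(parkGroup M P) where
  toFun m := ⟨Equiv.mulLeft m, fun x u _ => by simp [mul_assoc]⟩
  map_one' := by
    apply Subtype.ext
    ext x
    simp
  map_mul' m n := by
    apply Subtype.ext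
    ext x
    simp [mul_assoc]

/-- `P` is a Sylow `p`-subgroup of a subgroup `H` of `G`. -/
def IsSylowIn (p : ℕ) {G : Type*} [Group G] (H P : Subgroup G) : Prop :=
  P ≤ H ∧ IsPGroup p P ∧ ∀ Q : Subgroup G, Q ≤ H → IsPGroup p Q → P ≤ Q → Q = P

/-!
Park's group is the automorphism group of `M` as a right `P`-set. Such an automorphism is a
permutation of the cosets `M ⧸ P` together with one element of `P` per coset, so
`|Park(M, P)| = |M : P|! · |P| ^ |M : P|` and
`|Park(M, P) : ι M| = (|M : P| - 1)! · |P| ^ (|M : P| - 1)`, which is `2 · 4 ^ n` here.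

If `|G : H|` is a power of `p`, a Sylow `p`-subgroup `T` of `G` acts transitively on `G ⧸ H`,
so the `T`-fixed vectors of `k[G ⧸ H]` are the constant functions. On the other hand every nonzero
submodule contains a nonzero `T`-fixed vector: the additive subgroup generated by a `T`-orbit is
a finite `p`-group, so the number of `T`-fixed points in it is divisible by `p` and `0` is not the
only one. Hence two nonzero submodules always meet, and `k[G ⧸ H]` is indecomposable.
-/

lemma QuotientGroup.out_mk_inv_mul_mem {M : Type*} [Group M] {P : Subgroup M} (m : M) :
    (m : M ⧸ P).out⁻¹ * m ∈ P :=
  QuotientGroup.eq.mp (QuotientGroup.out_eq' _)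

namespace parkGroup

variable {M : Type*} [Group M] {P : Subgroup M}

lemma apply_eq_apply_out_mul (f : parkGroup M P) (m : M) :
    f.1 m = f.1 (m : M ⧸ P).out * ((m : M ⧸ P).out⁻¹ * m) := by
  rw [← f.2 _ _ (QuotientGroup.out_mk_inv_mul_mem m), mul_inv_cancel_left]

instance : MulAction (parkGroup M P) (M ⧸ P) where
  smul f := Quotient.map' f.1 fun a b hab => by
    rw [QuotientGroup.leftRel_apply] at hab ⊢
    rw [← mul_inv_cancel_left a b, f.2 _ _ hab, inv_mul_cancel_left]
    exact hab
  one_smul := Quotient.ind fun _ => rfl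
  mul_smul _ _ := Quotient.ind fun _ => rfl

lemma smul_mk (f : parkGroup M P) (m : M) : f • (m : M ⧸ P) = (f.1 m : M ⧸ P) := rfl

variable (P) in
/-- The inverse of `equivPermProd`: `c.out * u ↦ (σ c).out * (p c * u)` for `u ∈ P`. -/
noncomputable def mkFun (σ : Equiv.Perm (M ⧸ P)) (p : M ⧸ P → P) (m : M) : M :=
  (σ m).out * (p m * ((m : M ⧸ P).out⁻¹ * m))

lemma mk_mkFun (σ : Equiv.Perm (M ⧸ P)) (p : M ⧸ P → P) (m : M) :
    ((mkFun P σ p m : M) : M ⧸ P) = σ m := by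
  have hmem := mul_mem (p m).2 (QuotientGroup.out_mk_inv_mul_mem (P := P) m)
  rw [mkFun, QuotientGroup.mk_mul_of_mem _ hmem, QuotientGroup.out_eq']

lemma mkFun_mul_of_mem (σ : Equiv.Perm (M ⧸ P)) (p : M ⧸ P → P) (m : M) {u : M}
    (hu : u ∈ P) :
    mkFun P σ p (m * u) = mkFun P σ p m * u := by
  simp only [mkFun, QuotientGroup.mk_mul_of_mem m hu, mul_assoc]

lemma mkFun_inv_mkFun (σ : Equiv.Perm (M ⧸ P)) (p : M ⧸ P → P) (m : M) :
    mkFun P σ⁻¹ (fun c => (p (σ⁻¹ c))⁻¹) (mkFun P σ p m) = m := by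
  rw [mkFun, mk_mkFun, mkFun]
  simp only [Equiv.Perm.coe_inv, Equiv.symm_apply_apply, InvMemClass.coe_inv]
  group

lemma mkFun_mkFun_inv (σ : Equiv.Perm (M ⧸ P)) (p : M ⧸ P → P) (m : M) :
    mkFun P σ p (mkFun P σ⁻¹ (fun c => (p (σ⁻¹ c))⁻¹) m) = m := by
  simpa using mkFun_inv_mkFun σ⁻¹ (fun c => (p (σ⁻¹ c))⁻¹) m

variable (M P) in
noncomputable def equivPermProd : parkGroup M P ≃ Equiv.Perm (M ⧸ P) × (M ⧸ P → P) where
  toFun f := (MulAction.toPerm f, fun c => ⟨_, QuotientGroup.out_mk_inv_mul_mem (f.1 c.out)⟩)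
  invFun x :=
    ⟨⟨mkFun P x.1 x.2, mkFun P x.1⁻¹ (fun c => (x.2 (x.1⁻¹ c))⁻¹),
      mkFun_inv_mkFun x.1 x.2, mkFun_mkFun_inv x.1 x.2⟩,
      fun _ _ => mkFun_mul_of_mem x.1 x.2 _⟩
  left_inv f := by
    ext m
    have h : ((f.1 (m : M ⧸ P).out : M) : M ⧸ P) = f • (m : M ⧸ P) := by
      rw [← smul_mk, QuotientGroup.out_eq']
    simp only [Equiv.coe_fn_mk, mkFun, MulAction.toPerm_apply, h, smul_mk]
    rw [mul_assoc, mul_inv_cancel_left, ← apply_eq_apply_out_mul]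
  right_inv x := by
    refine Prod.ext (Equiv.ext fun c => ?_) (funext fun c => Subtype.ext ?_)
    · induction c using QuotientGroup.induction_on
      exact mk_mkFun x.1 x.2 _
    · simp only [Equiv.coe_fn_mk, mk_mkFun, QuotientGroup.out_eq']
      rw [mkFun, QuotientGroup.out_eq', inv_mul_cancel_left, inv_mul_cancel, mul_one]

lemma card_eq [Finite M] :
    Nat.card (parkGroup M P) =
      (Nat.card (M ⧸ P)).factorial * Nat.card P ^ Nat.card (M ⧸ P) := by
  rw [Nat.card_congr (equivPermProd M P), Nat.card_prod, Nat.card_perm, Nat.card_fun]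

end parkGroup

lemma parkEmbed_injective (M : Type*) [Group M] (P : Subgroup M) :
    Function.Injective (parkEmbed M P) := fun a b h => by
  simpa [parkEmbed] using congr(($h).1 1)

lemma index_range_parkEmbed (M : Type*) [Group M] [Finite M] (P : Subgroup M) :
    (parkEmbed M P).range.index = (P.index - 1).factorial * Nat.card P ^ (P.index - 1) := by
  obtain ⟨q, hq⟩ : ∃ q, P.index = q + 1 :=
    Nat.exists_eq_succ_of_ne_zero P.index_ne_zero_of_finite
  have hcard := (parkEmbed M P).range.card_mul_index
  rw [← Nat.card_congr (MonoidHom.ofInjective (parkEmbed_injective M P)).toEquiv,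
    parkGroup.card_eq, ← P.index_eq_card, ← P.card_mul_index, hq, Nat.factorial_succ,
    pow_succ] at hcard
  rw [hq, Nat.add_sub_cancel]
  refine Nat.eq_of_mul_eq_mul_left (Nat.mul_pos (Nat.card_pos (α := P)) q.add_one_pos) ?_
  rw [hcard]
  ring

lemma IsSylowIn.card_eq_and_index_eq {p : ℕ} [hp : Fact p.Prime] {M : Type*} [Group M]
    [Finite M] {q n : ℕ} (hq : ¬p ∣ q) (hM : Nat.card M = q * p ^ n) {P : Subgroup M}
    (hsyl : IsSylowIn p ⊤ P) : Nat.card P = p ^ n ∧ P.index = q := by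
  let S : Sylow p M := ⟨P, hsyl.2.1, fun {Q} hQ hle => hsyl.2.2 Q le_top hQ hle⟩
  have hP : Nat.card P = p ^ n := by
    rw [show P = S from rfl, S.card_eq_multiplicity, hM,
      Nat.factorization_mul (by rintro rfl; exact hq (dvd_zero p)) (pow_ne_zero n hp.out.ne_zero)]
    simp [hp.out.factorization_self, Nat.factorization_eq_zero_of_not_dvd hq]
  refine ⟨hP, Nat.eq_of_mul_eq_mul_left (pow_pos hp.out.pos n) ?_⟩
  rw [← hP, P.card_mul_index, hM, hP, mul_comm]

theorem IsPGroup.exists_fixed_ne_zero {p : ℕ} [hp : Fact p.Prime] {T V : Type*} [Group T]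
    [Finite T]
    [AddCommGroup V] [DistribMulAction T V] (hT : IsPGroup p T) (hV : ∀ v : V, p • v = 0)
    (S : AddSubgroup V) (hS : ∀ t : T, ∀ v ∈ S, t • v ∈ S) {u : V} (huS : u ∈ S)
    (hu : u ≠ 0) :
    ∃ v ∈ S, v ≠ 0 ∧ ∀ t : T, t • v = v := by
  let A := AddSubgroup.closure (Set.range fun t : T => t • u)
  have hAS : A ≤ S :=
    (AddSubgroup.closure_le S).mpr (Set.range_subset_iff.mpr fun t => hS t u huS)
  let A' : SubMulAction T V :=
    { carrier := A
      smul_mem' := fun t v hv => by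
        induction hv using AddSubgroup.closure_induction with
        | mem _ hx =>
          obtain ⟨s, rfl⟩ := hx
          exact AddSubgroup.subset_closure ⟨t * s, mul_smul t s u⟩
        | zero => rw [smul_zero]; exact A.zero_mem
        | add _ _ _ _ hx hy => rw [smul_add]; exact A.add_mem hx hy
        | neg _ _ hx => rw [smul_neg]; exact A.neg_mem hx }
  have : AddGroup.FG A := by
    rw [AddGroup.fg_iff_addSubgroup_fg]
    exact (AddSubgroup.fg_iff A).mpr ⟨_, rfl, Set.finite_range _⟩
  have : Finite A := AddCommGroup.finite_of_fg_isAddTorsion A fun x =>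
    isOfFinAddOrder_iff_nsmul_eq_zero.mpr ⟨p, hp.out.pos, Subtype.ext (hV x)⟩
  have hpA : p ∣ Nat.card A' := by
    have huA : u ∈ A := AddSubgroup.subset_closure ⟨1, one_smul T u⟩
    rw [← addOrderOf_eq_prime (x := (⟨u, huA⟩ : A)) (Subtype.ext (hV u))
      fun h => hu congr($h.1)]
    exact addOrderOf_dvd_natCard _
  obtain ⟨v, hv, hv0⟩ := hT.exists_fixed_point_of_prime_dvd_card_of_fixed_point A' hpA
    (a := ⟨0, A.zero_mem⟩) fun t => Subtype.ext (smul_zero t)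
  exact ⟨v, hAS v.2, fun h => hv0 (Subtype.ext h.symm), fun t => congr($(hv t).1)⟩

theorem Submodule.exists_fixed_ne_zero_of_isPGroup {p : ℕ} [Fact p.Prime] {k G N : Type*}
    [CommRing k] [CharP k p] [Group G] [AddCommGroup N] [Module (MonoidAlgebra k G) N]
    (T : Subgroup G) [Finite T] (hT : IsPGroup p T) {U : Submodule (MonoidAlgebra k G) N}
    (hU : U ≠ ⊥) : ∃ u ∈ U, u ≠ 0 ∧ ∀ t ∈ T, MonoidAlgebra.of k G t • u = u := by
  let _ := DistribMulAction.compHom N ((MonoidAlgebra.of k G).comp T.subtype)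
  have hN (v : N) : p • v = 0 := by
    rw [← Nat.cast_smul_eq_nsmul (MonoidAlgebra k G), ← map_natCast (algebraMap k _),
      CharP.cast_eq_zero, map_zero, zero_smul]
  obtain ⟨u, huU, hu⟩ := U.exists_mem_ne_zero_of_ne_bot hU
  obtain ⟨v, hvU, hv, hfix⟩ := hT.exists_fixed_ne_zero hN U.toAddSubgroup
    (fun t _ hv => U.smul_mem _ hv) huU hu
  exact ⟨v, hvU, hv, fun t ht => hfix ⟨t, ht⟩⟩

theorem Sylow.isPretransitive_quotient_of_index_eq_pow {p : ℕ} [hp : Fact p.Prime] {G : Type*}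
    [Group G] [Finite G] (T : Sylow p G) {H : Subgroup G} {m : ℕ} (hm : H.index = p ^ m) :
    MulAction.IsPretransitive (T : Subgroup G) (G ⧸ H) := by
  rw [MulAction.isPretransitive_iff_orbit_eq_univ ((1 : G) : G ⧸ H), Set.eq_univ_iff_ncard]
  have hstab : MulAction.stabilizer T ((1 : G) : G ⧸ H) = H.subgroupOf T := by
    ext t
    rw [Subgroup.mem_subgroupOf, MulAction.mem_stabilizer_iff]
    change ((t : G) • ((1 : G) : G ⧸ H)) = _ ↔ _
    rw [MulAction.Quotient.smul_mk, smul_eq_mul, mul_one, QuotientGroup.eq, mul_one,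
      inv_mem_iff]
  have hrel : H.relIndex T * (T : Subgroup G).index = (T : Subgroup G).relIndex H * p ^ m := by
    rw [← Subgroup.inf_relIndex_right, Subgroup.relIndex_mul_index inf_le_right, ← hm,
      ← Subgroup.inf_relIndex_left, Subgroup.relIndex_mul_index inf_le_left]
  have hdvd : p ^ m ∣ H.relIndex T :=
    (Nat.Coprime.pow_left m ((hp.out.coprime_iff_not_dvd).mpr T.not_dvd_index)).dvd_of_dvd_mul_right
      (Dvd.intro_left _ hrel.symm)
  refine le_antisymm (Set.ncard_le_card _) ?_
  rw [← MulAction.index_stabilizer, hstab, ← H.index_eq_card, hm]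
  exact Nat.le_of_dvd (Nat.pos_of_ne_zero Subgroup.index_ne_zero_of_finite) hdvd

theorem Representation.coeff_eq_of_forall_ofMulAction_eq {k G X : Type*} [CommSemiring k]
    [Group G] [MulAction G X] [MulAction.IsPretransitive G X] {v : MonoidAlgebra k X}
    (hv : ∀ g : G, ofMulAction k G X g v = v) (x y : X) : v.coeff x = v.coeff y := by
  obtain ⟨g, rfl⟩ := MulAction.exists_smul_eq G y x
  conv_rhs => rw [← hv g⁻¹, coeff_ofMulAction, inv_inv]

theorem isIndecomposableModule_permutationModule_of_index_eq_pow {p : ℕ} [Fact p.Prime]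
    {k : Type*} [Field k] [CharP k p] {G : Type*} [Group G] [Finite G] {H : Subgroup G} {m : ℕ}
    (hm : H.index = p ^ m) :
    IsIndecomposableModule (MonoidAlgebra k G) (PermutationModule k G (G ⧸ H)) := by
  set ρ := Representation.ofMulAction k G (G ⧸ H)
  set e := ρ.asModuleEquiv
  refine ⟨inferInstanceAs (Nontrivial (MonoidAlgebra k (G ⧸ H))), fun U W hUW => ?_⟩
  by_contra! hne
  obtain ⟨T⟩ : Nonempty (Sylow p G) := inferInstance
  have := T.isPretransitive_quotient_of_index_eq_pow hm
  have hconst {v : ρ.asModule} (hv : ∀ t ∈ (T : Subgroup G), MonoidAlgebra.of k G t • v = v)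
      (x : G ⧸ H) : (e v).coeff x = (e v).coeff (1 : G) := by
    refine Representation.coeff_eq_of_forall_ofMulAction_eq (G := T) (fun t => ?_) _ _
    change ρ t (e v) = _
    rw [← Representation.asAlgebraHom_of, ← Representation.asModuleEquiv_map_smul, hv t t.2]
  have hcoeff_ne {v : ρ.asModule}
      (hv : ∀ t ∈ (T : Subgroup G), MonoidAlgebra.of k G t • v = v) (hv0 : v ≠ 0) :
      (e v).coeff (1 : G) ≠ 0 := fun h => hv0 <| e.map_eq_zero_iff.mp <| by
    ext x
    rw [hconst hv x, h]
    rfl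
  obtain ⟨u, huU, hu0, hu⟩ := Submodule.exists_fixed_ne_zero_of_isPGroup T T.isPGroup' hne.1
  obtain ⟨w, hwW, hw0, hw⟩ := Submodule.exists_fixed_ne_zero_of_isPGroup T T.isPGroup' hne.2
  have hbu : (e w).coeff (1 : G) • u = (e u).coeff (1 : G) • w := e.injective <| by
    rw [map_smul, map_smul]
    ext x
    simp only [MonoidAlgebra.coeff_smul, Finsupp.smul_apply, smul_eq_mul, hconst hu x,
      hconst hw x, mul_comm]
  have hmem : (e w).coeff (1 : G) • u ∈ U ⊓ W :=
    ⟨U.smul_of_tower_mem _ huU, hbu ▸ W.smul_of_tower_mem _ hwW⟩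
  rw [hUW.inf_eq_bot, Submodule.mem_bot, smul_eq_zero] at hmem
  exact hmem.elim (hcoeff_ne hw hw0) hu0

theorem statement17_general (n : ℕ)
    (M : Type*) [Group M] [Finite M] (hM : Nat.card M = 3 * 2 ^ n)
    (P : Subgroup M) (hsyl : IsSylowIn 2 ⊤ P)
    (k : Type*) [Field k] [CharP k 2] :
    (∃ m : ℕ, ((parkEmbed M P).range : Subgroup ↥(parkGroup M P)).index = 2 ^ m) ∧
      IsIndecomposableModule (MonoidAlgebra k ↥(parkGroup M P))
        (PermutationModule k ↥(parkGroup M P)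
          (↥(parkGroup M P) ⧸ (parkEmbed M P).range)) := by
  obtain ⟨hP, hidx⟩ := hsyl.card_eq_and_index_eq (by norm_num) hM
  have hindex : (parkEmbed M P).range.index = 2 ^ (2 * n + 1) := by
    rw [index_range_parkEmbed, hP, hidx]
    ring
  exact ⟨⟨_, hindex⟩, isIndecomposableModule_permutationModule_of_index_eq_pow hindex⟩

/-- let `M` be a finite group of order `3·2^n` (`n ≥ 3`), `P` a Sylow
`2`-subgroup of `M`, `G = Park(M, P)`, `ι` Park's embedding, and `k` an
algebraically closed field of characteristic `2`.  Then the index `|G : ι(M)|` is a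
power of `2`, and the permutation module `k[G/ι(M)]` is indecomposable. -/
theorem statement17 (n : ℕ) (hn : 3 ≤ n)
    (M : Type*) [Group M] [Finite M] (hM : Nat.card M = 3 * 2 ^ n)
    (P : Subgroup M) (hsyl : IsSylowIn 2 ⊤ P)
    (k : Type*) [Field k] [IsAlgClosed k] [CharP k 2] :
    (∃ m : ℕ, ((parkEmbed M P).range : Subgroup ↥(parkGroup M P)).index = 2 ^ m) ∧
      IsIndecomposableModule (MonoidAlgebra k ↥(parkGroup M P))
        (PermutationModule k ↥(parkGroup M P)
          (↥(parkGroup M P) ⧸ (parkEmbed M P).range)) :=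
  statement17_general n M hM P hsyl k
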